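/- If every γ_{ba} is an isometric isomorphism, the map π*([p̄]) = χ_{p̄} is a well-defined representation of the path groupoid S̄/~ by partial isometries on H = ⊕_{a∈K}(H_a ⊗ ℓ²(S_a)); that is, π*([p̄]*[q̄]) = π*([p̄]) π*([q̄]) whenever ∂₁p̄ = ∂₀q̄. -/

import Mathlib

namespace PosetNets

/-- A composable sequence of elementary paths on a partially ordered set `K`,
from a starting point to an ending point.  `up h p` appends an ascending
elementary step `(c,b)̄` (with `b ≤ c`) to `p`, and `down h p` appends a
descending elementary step `(c,b)` (with `c ≤ b`). -/
inductive Path (K : Type) [PartialOrder K] : K → K → Type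
  | nil (a : K) : Path K a a
  | up {a b c : K} (h : b ≤ c) (p : Path K a b) : Path K a c
  | down {a b c : K} (h : c ≤ b) (p : Path K a b) : Path K a c

namespace Path

variable {K : Type} [PartialOrder K]

/-- Concatenation of composable sequences of elementary paths. -/
def comp : ∀ {a b c : K}, Path K b c → Path K a b → Path K a c
  | _, _, _, .nil _, q => q
  | _, _, _, .up h p, q => .up h (p.comp q)
  | _, _, _, .down h p, q => .down h (p.comp q)

/-- The ascending elementary path `(b,a)̄` (for `a ≤ b`), from `a` to `b`. -/
def sUp {a b : K} (h : a ≤ b) : Path K a b := .up h (.nil a)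

/-- The descending elementary path `(b,a)` (for `b ≤ a`), from `a` to `b`. -/
def sDown {a b : K} (h : b ≤ a) : Path K a b := .down h (.nil a)

/-- The reverse sequence `p̄⁻¹ = s₁⁻¹ * ⋯ * sₙ⁻¹` of a sequence
`p̄ = sₙ * ⋯ * s₁` of elementary paths. -/
def reverse : ∀ {a b : K}, Path K a b → Path K b a
  | _, _, .nil a => .nil a
  | _, _, .up h p => p.reverse.comp (sDown h)
  | _, _, .down h p => p.reverse.comp (sUp h)

end Path

/-- The equivalence relation on sequences of elementary paths generated by the
four relations `(a,b)*(b,c) ~ (a,c)`, `(c,b)̄*(b,a)̄ ~ (c,a)̄`,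
`(a,b)*(b,a)̄ ~ i_a`, `(b,a)̄*(a,b) ~ i_b` (for `a ≤ b ≤ c`), applied at any
position of a sequence. -/
inductive PathEquiv {K : Type} [PartialOrder K] : ∀ {a b : K}, Path K a b → Path K a b → Prop
  | refl {a b : K} (p : Path K a b) : PathEquiv p p
  | symm {a b : K} {p q : Path K a b} : PathEquiv p q → PathEquiv q p
  | trans {a b : K} {p q r : Path K a b} : PathEquiv p q → PathEquiv q r → PathEquiv p r
  | comp_congr {a b c : K} {p p' : Path K b c} {q q' : Path K a b} :
      PathEquiv p p' → PathEquiv q q' → PathEquiv (p.comp q) (p'.comp q')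
  | down_down {a b c : K} (h1 : a ≤ b) (h2 : b ≤ c) :
      PathEquiv ((Path.sDown h1).comp (Path.sDown h2)) (Path.sDown (h1.trans h2))
  | up_up {a b c : K} (h1 : a ≤ b) (h2 : b ≤ c) :
      PathEquiv ((Path.sUp h2).comp (Path.sUp h1)) (Path.sUp (h1.trans h2))
  | down_up {a b : K} (h : a ≤ b) :
      PathEquiv ((Path.sDown h).comp (Path.sUp h)) (Path.nil a)
  | up_down {a b : K} (h : a ≤ b) :
      PathEquiv ((Path.sUp h).comp (Path.sDown h)) (Path.nil b)

/-- The set of equivalence classes of loops based at `a`. -/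
def LoopCl (K : Type) [PartialOrder K] (a : K) := Quot (@PathEquiv K _ a a)

end PosetNets

namespace PosetNets

open scoped Classical

/-- A net of Hilbert spaces over the partially ordered set `K`: a family of complex
Hilbert spaces `H a` together with isometric embeddings `γ hab : H a → H b` for
`a ≤ b`, compatible with composition. -/
structure HilbertNet (K : Type) [PartialOrder K] where
  H : K → Type
  [normed : ∀ a : K, NormedAddCommGroup (H a)]
  [ips : ∀ a : K, InnerProductSpace ℂ (H a)]
  [cs : ∀ a : K, CompleteSpace (H a)]
  γ : ∀ {a b : K}, a ≤ b → (H a →ₗᵢ[ℂ] H b)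
  γ_id : ∀ (a : K) (v : H a), γ (le_refl a) v = v
  γ_comp : ∀ {a b c : K} (hab : a ≤ b) (hbc : b ≤ c) (v : H a),
      γ hbc (γ hab v) = γ (hab.trans hbc) v

attribute [instance] HilbertNet.normed HilbertNet.ips HilbertNet.cs

/-- Equality of starting point together with path equivalence, for paths ending at `a`. -/
inductive SPathRel (K : Type) [PartialOrder K] (a : K) :
    (Σ x : K, Path K x a) → (Σ x : K, Path K x a) → Prop
  | mk {x : K} {p q : Path K x a} : PathEquiv p q → SPathRel K a ⟨x, p⟩ ⟨x, q⟩

/-- `S_a`: the set of (equivalence classes of) paths on `K` with ending point `a`. -/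
def PCl (K : Type) [PartialOrder K] (a : K) := Quot (SPathRel K a)

/-- The index set `⨆_{a ∈ K} S_a` for the orthonormal basis of
`H = ⊕_{a∈K} (H_a ⊗ ℓ²(S_a))`. -/
def PIdx (K : Type) [PartialOrder K] := Σ a : K, PCl K a

/-- The Hilbert space `H = ⊕_{a∈K} (H_a ⊗ ℓ²(S_a))`, realized as the ℓ²-direct sum of
copies of `H_a` indexed by the paths ending at `a`, for all `a ∈ K`.  The elementary
tensor `h ⊗ e_p` (for `h ∈ H_a`, `p ∈ S_a`) corresponds to `lp.single 2 ⟨a, p⟩ h`. -/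
noncomputable abbrev BigH {K : Type} [PartialOrder K] (N : HilbertNet K) :=
  lp (fun i : PIdx K => N.H i.1) 2

/-- The map `S_a → S_b`, `p ↦ [(b,a)̄ * p̄]`, for `a ≤ b`. -/
def shiftCl {K : Type} [PartialOrder K] {a b : K} (hab : a ≤ b) : PCl K a → PCl K b :=
  Quot.lift (fun s => Quot.mk _ ⟨s.1, (Path.sUp hab).comp s.2⟩)
    (by
      rintro ⟨x, p⟩ ⟨y, q⟩ h
      cases h with
      | mk h => exact Quot.sound (SPathRel.mk (PathEquiv.comp_congr (PathEquiv.refl _) h)))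

/-- The operator `χ_{p̄}` on `H` associated to a sequence `p̄` of elementary paths:
the composition, along the steps of `p̄`, of the operators `χ_a^b` (ascending steps)
and their adjoints `(χ_a^b)*` (descending steps); the empty sequence `i_a` yields
`χ_a^a` (the projection onto the component `H_a ⊗ ℓ²(S_a)`). -/
noncomputable def chi {K : Type} [PartialOrder K] (N : HilbertNet K)
    (X : ∀ (a b : K), a ≤ b → (BigH N →L[ℂ] BigH N)) :
    ∀ {a b : K}, Path K a b → (BigH N →L[ℂ] BigH N)
  | _, _, .nil a => X a a (le_refl a)
  | _, _, .up (b := b) (c := c) h p => X b c h ∘L chi N X p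
  | _, _, .down (b := b) (c := c) h p =>
      (ContinuousLinearMap.adjoint (X c b h)) ∘L chi N X p

/-- The defining action of the partial isometries `χ_a^b` on the basis vectors
`h ⊗ e_p` with `h ∈ H_a`, `p ∈ S_a`:  `χ_a^b (h ⊗ e_p) = γ_{ba}(h) ⊗ e_{[(b,a)̄ * p̄]}`. -/
def ChiOnBasis {K : Type} [PartialOrder K] (N : HilbertNet K)
    (X : ∀ (a b : K), a ≤ b → (BigH N →L[ℂ] BigH N)) : Prop :=
  ∀ (a b : K) (hab : a ≤ b) (q : PCl K a) (h : N.H a),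
    X a b hab (lp.single 2 (⟨a, q⟩ : PIdx K) h) =
      lp.single 2 (⟨b, shiftCl hab q⟩ : PIdx K) (N.γ hab h)

/-- `χ_a^b` vanishes on the components `H_c ⊗ ℓ²(S_c)` with `c ≠ a`. -/
def ChiVanishes {K : Type} [PartialOrder K] (N : HilbertNet K)
    (X : ∀ (a b : K), a ≤ b → (BigH N →L[ℂ] BigH N)) : Prop :=
  ∀ (a b : K) (hab : a ≤ b) (i : PIdx K) (h : N.H i.1),
    i.1 ≠ a → X a b hab (lp.single 2 i h) = 0


section Aux

variable {K : Type} [PartialOrder K]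

@[simp] theorem Path.nil_comp {a b : K} (q : Path K a b) : (Path.nil b).comp q = q := by
  simp [Path.comp]

@[simp] theorem Path.up_comp {a b c d : K} (h : c ≤ d) (p : Path K b c) (q : Path K a b) :
    (Path.up h p).comp q = Path.up h (p.comp q) := by simp [Path.comp]

@[simp] theorem Path.down_comp {a b c d : K} (h : d ≤ c) (p : Path K b c) (q : Path K a b) :
    (Path.down h p).comp q = Path.down h (p.comp q) := by simp [Path.comp]

theorem Path.comp_assoc {a b c d : K} (p : Path K c d) (q : Path K b c) (r : Path K a b) :
    (p.comp q).comp r = p.comp (q.comp r) := by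
  induction p with
  | nil => simp
  | up h p ih => simp [ih]
  | down h p ih => simp [ih]

theorem PathEquiv.sUp_refl (a : K) : PathEquiv (Path.sUp (le_refl a)) (Path.nil a) := by
  have e1 : PathEquiv (Path.sUp (le_refl a))
      ((Path.sUp (le_refl a)).comp ((Path.sUp (le_refl a)).comp (Path.sDown (le_refl a)))) := by
    have := PathEquiv.comp_congr (PathEquiv.refl (Path.sUp (le_refl a)))
      (PathEquiv.symm (PathEquiv.up_down (le_refl a)))
    simpa [Path.sUp, Path.sDown] using this
  have e2 : PathEquiv
      ((Path.sUp (le_refl a)).comp ((Path.sUp (le_refl a)).comp (Path.sDown (le_refl a))))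
      ((Path.sUp (le_refl a)).comp (Path.sDown (le_refl a))) := by
    rw [← Path.comp_assoc]
    exact PathEquiv.comp_congr (PathEquiv.up_up (le_refl a) (le_refl a)) (PathEquiv.refl _)
  exact e1.trans (e2.trans (PathEquiv.up_down (le_refl a)))

theorem PathEquiv.sDown_refl (a : K) : PathEquiv (Path.sDown (le_refl a)) (Path.nil a) := by
  have e1 : PathEquiv (Path.sDown (le_refl a))
      ((Path.sDown (le_refl a)).comp ((Path.sDown (le_refl a)).comp (Path.sUp (le_refl a)))) := by
    have := PathEquiv.comp_congr (PathEquiv.refl (Path.sDown (le_refl a)))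
      (PathEquiv.symm (PathEquiv.down_up (le_refl a)))
    simpa [Path.sUp, Path.sDown] using this
  have e2 : PathEquiv
      ((Path.sDown (le_refl a)).comp ((Path.sDown (le_refl a)).comp (Path.sUp (le_refl a))))
      ((Path.sDown (le_refl a)).comp (Path.sUp (le_refl a))) := by
    rw [← Path.comp_assoc]
    exact PathEquiv.comp_congr (PathEquiv.down_down (le_refl a) (le_refl a)) (PathEquiv.refl _)
  exact e1.trans (e2.trans (PathEquiv.down_up (le_refl a)))

/-- The inverse shift `S_b → S_a`, `r ↦ [(b,a) * r̄]`, for `a ≤ b`. -/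
def shiftDownCl {a b : K} (hab : a ≤ b) : PCl K b → PCl K a :=
  Quot.lift (fun s => Quot.mk _ ⟨s.1, (Path.sDown hab).comp s.2⟩)
    (by
      rintro ⟨x, p⟩ ⟨y, q⟩ h
      cases h with
      | mk h => exact Quot.sound (SPathRel.mk (PathEquiv.comp_congr (PathEquiv.refl _) h)))

theorem shiftCl_mk {a b : K} (hab : a ≤ b) (x : K) (r : Path K x a) :
    shiftCl hab (Quot.mk _ ⟨x, r⟩) = Quot.mk _ ⟨x, (Path.sUp hab).comp r⟩ := rfl

theorem shiftDownCl_mk {a b : K} (hab : a ≤ b) (x : K) (r : Path K x b) :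
    shiftDownCl hab (Quot.mk _ ⟨x, r⟩) = Quot.mk _ ⟨x, (Path.sDown hab).comp r⟩ := rfl

/-- `shiftCl` as an equivalence `S_a ≃ S_b`. -/
def shiftE {a b : K} (hab : a ≤ b) : PCl K a ≃ PCl K b where
  toFun := shiftCl hab
  invFun := shiftDownCl hab
  left_inv := by
    apply Quot.ind
    rintro ⟨x, r⟩
    show shiftDownCl hab (Quot.mk _ ⟨x, (Path.sUp hab).comp r⟩) = _
    rw [shiftDownCl_mk]
    apply Quot.sound
    apply SPathRel.mk
    have := PathEquiv.comp_congr (PathEquiv.down_up hab) (PathEquiv.refl r)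
    rw [Path.comp_assoc] at this
    simpa using this
  right_inv := by
    apply Quot.ind
    rintro ⟨x, r⟩
    show shiftCl hab (Quot.mk _ ⟨x, (Path.sDown hab).comp r⟩) = _
    rw [shiftCl_mk]
    apply Quot.sound
    apply SPathRel.mk
    have := PathEquiv.comp_congr (PathEquiv.up_down hab) (PathEquiv.refl r)
    rw [Path.comp_assoc] at this
    simpa using this

theorem shiftE_apply {a b : K} (hab : a ≤ b) (s : PCl K a) : shiftE hab s = shiftCl hab s := rfl

theorem shiftE_symm_apply {a b : K} (hab : a ≤ b) (s : PCl K b) :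
    (shiftE hab).symm s = shiftDownCl hab s := rfl

theorem shiftCl_refl {a : K} (s : PCl K a) : shiftCl (le_refl a) s = s := by
  induction s using Quot.ind with
  | _ s =>
    rcases s with ⟨x, r⟩
    rw [shiftCl_mk]
    apply Quot.sound
    apply SPathRel.mk
    have := PathEquiv.comp_congr (PathEquiv.sUp_refl a) (PathEquiv.refl r)
    simpa using this

/-- The action `p̄ : S_a ≃ S_b` of a path `p̄` from `a` to `b` on path classes. -/
def sigE : ∀ {a b : K}, Path K a b → (PCl K a ≃ PCl K b)
  | _, _, .nil _ => Equiv.refl _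
  | _, _, .up h p => (sigE p).trans (shiftE h)
  | _, _, .down h p => (sigE p).trans (shiftE h).symm

theorem sigE_apply {a b : K} (p : Path K a b) : ∀ (x : K) (r : Path K x a),
    sigE p (Quot.mk _ ⟨x, r⟩) = Quot.mk _ ⟨x, p.comp r⟩ := by
  induction p with
  | nil => intro x r; simp [sigE]; rfl
  | up h p ih =>
      intro x r
      simp only [sigE, Equiv.trans_apply, shiftE_apply]
      show shiftCl h (sigE p (Quot.mk _ ⟨x, r⟩)) = _
      rw [ih, shiftCl_mk]
      have e : (Path.sUp h).comp (p.comp r) = (Path.up h p).comp r := by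
        simp [Path.sUp, Path.comp_assoc]
      rw [e]
  | down h p ih =>
      intro x r
      simp only [sigE, Equiv.trans_apply, shiftE_symm_apply]
      show shiftDownCl h (sigE p (Quot.mk _ ⟨x, r⟩)) = _
      rw [ih, shiftDownCl_mk]
      have e : (Path.sDown h).comp (p.comp r) = (Path.down h p).comp r := by
        simp [Path.sDown, Path.comp_assoc]
      rw [e]

theorem sigE_equiv {a b : K} {p q : Path K a b} (h : PathEquiv p q) (s : PCl K a) :
    sigE p s = sigE q s := by
  induction s using Quot.ind with
  | _ s =>
    rcases s with ⟨x, r⟩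
    rw [sigE_apply, sigE_apply]
    exact Quot.sound (SPathRel.mk (PathEquiv.comp_congr h (PathEquiv.refl r)))

variable (N : HilbertNet K)
  (hsurj : ∀ {a b : K} (hab : a ≤ b), Function.Surjective (N.γ hab))

/-- A fixed copy of `lp.single` on `H`, insulating us from `DecidableEq` instance issues. -/
noncomputable def sing (i : PIdx K) (x : N.H i.1) : BigH N := lp.single 2 i x

theorem lp_single_irrel {ι : Type} {E : ι → Type} [inst : ∀ i, NormedAddCommGroup (E i)]
    (d1 d2 : DecidableEq ι) (p : ENNReal) (i : ι) (x : E i) :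
    @lp.single ι E inst d1 p i x = @lp.single ι E inst d2 p i x := by
  rw [Subsingleton.elim d1 d2]

theorem sing_eq (d : DecidableEq (PIdx K)) (i : PIdx K) (x : N.H i.1) :
    sing N i x = @lp.single (PIdx K) (fun i => N.H i.1) _ d 2 i x := by
  unfold sing
  apply lp_single_irrel

theorem PIdx.snd_eq {a : K} {s t : PCl K a} (hcon : (⟨a, s⟩ : PIdx K) = ⟨a, t⟩) : s = t := by
  injection hcon with h1 h2
  all_goals first | exact eq_of_heq h2 | exact h2

theorem sing_congr2 {a : K} {s t : PCl K a} (hst : s = t) {x y : N.H a} (hxy : x = y) :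
    sing N ⟨a, s⟩ x = sing N ⟨a, t⟩ y := by subst hst; subst hxy; rfl

theorem sing_inner_right (f : BigH N) (i : PIdx K) (x : N.H i.1) :
    (inner ℂ f (sing N i x) : ℂ) = inner ℂ (f i) x :=
  lp.inner_single_right i x f

theorem sing_apply_self (i : PIdx K) (x : N.H i.1) : (sing N i x) i = x := by
  unfold sing
  apply lp.single_apply_self

theorem sing_apply_ne (i : PIdx K) (x : N.H i.1) {j : PIdx K} (h : j ≠ i) :
    (sing N i x) j = 0 := by
  unfold sing
  apply lp.single_apply_ne
  exact h

theorem sing_hasSum (f : BigH N) : HasSum (fun i : PIdx K => sing N i (f i)) f :=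
  lp.hasSum_single (by norm_num) f

theorem lie_symm_trans_apply {A B C : Type} [NormedAddCommGroup A] [NormedAddCommGroup B]
    [NormedAddCommGroup C] [InnerProductSpace ℂ A] [InnerProductSpace ℂ B]
    [InnerProductSpace ℂ C] (e1 : A ≃ₗᵢ[ℂ] B) (e2 : B ≃ₗᵢ[ℂ] C) (v : C) :
    (e1.trans e2).symm v = e1.symm (e2.symm v) := rfl

theorem lie_refl_symm {A : Type} [NormedAddCommGroup A] [InnerProductSpace ℂ A] (v : A) :
    (LinearIsometryEquiv.refl ℂ A).symm v = v := rfl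

/-- `γ_{ba}` as a linear isometric equivalence. -/
noncomputable def gamE {a b : K} (hab : a ≤ b) : N.H a ≃ₗᵢ[ℂ] N.H b :=
  LinearIsometryEquiv.ofSurjective (N.γ hab) (hsurj hab)

theorem gamE_apply {a b : K} (hab : a ≤ b) (v : N.H a) :
    gamE N hsurj hab v = N.γ hab v := by
  rw [gamE, LinearIsometryEquiv.coe_ofSurjective]

/-- The isometric equivalence `H_a ≃ H_b` obtained by transporting along `p̄`. -/
noncomputable def tau : ∀ {a b : K}, Path K a b → (N.H a ≃ₗᵢ[ℂ] N.H b)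
  | _, _, .nil _ => LinearIsometryEquiv.refl ℂ _
  | _, _, .up h p => (tau p).trans (gamE N hsurj h)
  | _, _, .down h p => (tau p).trans (gamE N hsurj h).symm

theorem tau_comp {a b c : K} (p : Path K b c) : ∀ (q : Path K a b) (v : N.H a),
    tau N hsurj (p.comp q) v = tau N hsurj p (tau N hsurj q v) := by
  induction p with
  | nil => intro q v; simp [tau]
  | up h p ih => intro q v; simp [tau, ih]
  | down h p ih => intro q v; simp [tau, ih]

theorem gamE_comp {a b c : K} (hab : a ≤ b) (hbc : b ≤ c) (v : N.H a) :
    gamE N hsurj hbc (gamE N hsurj hab v) = gamE N hsurj (hab.trans hbc) v := by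
  rw [gamE_apply, gamE_apply, gamE_apply, N.γ_comp]

theorem gamE_symm_comp {a b c : K} (hab : a ≤ b) (hbc : b ≤ c) (v : N.H c) :
    (gamE N hsurj hab).symm ((gamE N hsurj hbc).symm v) =
      (gamE N hsurj (hab.trans hbc)).symm v := by
  apply (gamE N hsurj (hab.trans hbc)).injective
  rw [LinearIsometryEquiv.apply_symm_apply, ← gamE_comp N hsurj hab hbc,
    LinearIsometryEquiv.apply_symm_apply, LinearIsometryEquiv.apply_symm_apply]

theorem gamE_refl {a : K} (v : N.H a) : gamE N hsurj (le_refl a) v = v := by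
  rw [gamE_apply, N.γ_id]

theorem tau_equiv {a b : K} {p q : Path K a b} (h : PathEquiv p q) (v : N.H a) :
    tau N hsurj p v = tau N hsurj q v := by
  induction h with
  | refl _ => rfl
  | symm _ ih => exact (ih v).symm
  | trans _ _ ih1 ih2 => exact (ih1 v).trans (ih2 v)
  | comp_congr _ _ ih1 ih2 =>
      rw [tau_comp, tau_comp, ih2]; exact ih1 _
  | down_down h1 h2 =>
      rw [tau_comp]
      simp only [tau, Path.sDown, LinearIsometryEquiv.trans_apply,
        LinearIsometryEquiv.coe_refl, id_eq]
      exact gamE_symm_comp N hsurj h1 h2 _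
  | up_up h1 h2 =>
      rw [tau_comp]
      simp only [tau, Path.sUp, LinearIsometryEquiv.trans_apply,
        LinearIsometryEquiv.coe_refl, id_eq]
      exact gamE_comp N hsurj _ _ _
  | down_up h =>
      rw [tau_comp]
      simp only [tau, Path.sUp, Path.sDown, LinearIsometryEquiv.trans_apply,
        LinearIsometryEquiv.coe_refl, id_eq]
      exact (gamE N hsurj h).symm_apply_apply _
  | up_down h =>
      rw [tau_comp]
      simp only [tau, Path.sUp, Path.sDown, LinearIsometryEquiv.trans_apply,
        LinearIsometryEquiv.coe_refl, id_eq]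
      exact (gamE N hsurj h).apply_symm_apply _

/-- Two continuous linear maps on `H` agreeing on all `lp.single`s are equal. -/
theorem ext_single {T S : BigH N →L[ℂ] BigH N}
    (h : ∀ (i : PIdx K) (x : N.H i.1), T (sing N i x) = S (sing N i x)) :
    T = S := by
  refine ContinuousLinearMap.ext fun f => ?_
  have hf : HasSum (fun i : PIdx K => sing N i (f i)) f := sing_hasSum N f
  have h1 : HasSum (fun i : PIdx K => S (sing N i (f i))) (T f) := by
    have := hf.mapL T
    simpa only [h] using this
  exact h1.unique (hf.mapL S)

/-- Two vectors of `H` with the same inner products against all `lp.single`s are equal. -/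
theorem inner_single_ext {u w : BigH N}
    (h : ∀ (i : PIdx K) (x : N.H i.1),
      (inner ℂ u (sing N i x) : ℂ) = inner ℂ w (sing N i x)) : u = w := by
  apply lp.ext
  funext i
  apply ext_inner_right ℂ
  intro x
  have := h i x
  rwa [sing_inner_right, sing_inner_right] at this

end Aux

section Chi

open ContinuousLinearMap

variable {K : Type} [PartialOrder K] (N : HilbertNet K)
  (X : ∀ (a b : K), a ≤ b → (BigH N →L[ℂ] BigH N))
  (hX : ChiOnBasis N X) (hX0 : ChiVanishes N X)
  (hsurj : ∀ {a b : K} (hab : a ≤ b), Function.Surjective (N.γ hab))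

set_option linter.unusedSectionVars false
include hX hX0 hsurj

/-- `hX` restated in terms of `sing`. -/
theorem hX' (a b : K) (hab : a ≤ b) (q : PCl K a) (h : N.H a) :
    X a b hab (sing N ⟨a, q⟩ h) = sing N ⟨b, shiftCl hab q⟩ (N.γ hab h) := by
  refine Eq.trans ?_ (Eq.trans (hX a b hab q h) ?_)
  · exact congrArg (X a b hab) (sing_eq N _ _ _)
  · exact (sing_eq N _ _ _).symm

/-- `hX0` restated in terms of `sing`. -/
theorem hX0' (a b : K) (hab : a ≤ b) (i : PIdx K) (x : N.H i.1) (hi : i.1 ≠ a) :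
    X a b hab (sing N i x) = 0 := by
  refine Eq.trans ?_ (hX0 a b hab i x hi)
  exact congrArg (X a b hab) (sing_eq N _ _ _)

theorem adjX_single_eq {a b : K} (hab : a ≤ b) (s : PCl K b) (h : N.H b) :
    adjoint (X a b hab) (sing N ⟨b, s⟩ h) =
      sing N ⟨a, (shiftE hab).symm s⟩ ((gamE N hsurj hab).symm h) := by
  apply inner_single_ext N
  rintro ⟨c, q⟩ x
  rw [adjoint_inner_left]
  by_cases hc : c = a
  · subst hc
    erw [hX' N X hX hX0 hsurj c b hab q x, sing_inner_right, sing_inner_right]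
    by_cases hq : q = (shiftE hab).symm s
    · subst hq
      have hs : shiftCl hab ((shiftE hab).symm s) = s := (shiftE hab).apply_symm_apply s
      erw [hs, sing_apply_self, sing_apply_self]
      have e : (inner ℂ ((gamE N hsurj hab).symm h) x : ℂ) = inner ℂ h (N.γ hab x) := by
        rw [← (gamE N hsurj hab).inner_map_map ((gamE N hsurj hab).symm h) x,
          (gamE N hsurj hab).apply_symm_apply, gamE_apply]
      exact e.symm
    · have h1 : (⟨b, shiftCl hab q⟩ : PIdx K) ≠ ⟨b, s⟩ := by
        intro hcon
        apply hq
        have h2 : shiftCl hab q = s := PIdx.snd_eq hcon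
        rw [← h2, ← shiftE_apply, Equiv.symm_apply_apply]
      have h2 : (⟨c, q⟩ : PIdx K) ≠ ⟨c, (shiftE hab).symm s⟩ := by
        intro hcon
        apply hq
        exact PIdx.snd_eq hcon
      rw [sing_apply_ne N _ _ h1, sing_apply_ne N _ _ h2, inner_zero_left, inner_zero_left]
  · erw [hX0' N X hX hX0 hsurj a b hab ⟨c, q⟩ x hc, inner_zero_right, sing_inner_right,
      sing_apply_ne N _ _ (fun hcon => hc (congrArg Sigma.fst hcon)), inner_zero_left]

theorem adjX_single_ne {a b : K} (hab : a ≤ b) (i : PIdx K) (x : N.H i.1) (hi : i.1 ≠ b) :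
    adjoint (X a b hab) (sing N i x) = 0 := by
  apply inner_single_ext N
  rintro ⟨c, q⟩ y
  rw [adjoint_inner_left, inner_zero_left]
  by_cases hc : c = a
  · subst hc
    erw [hX' N X hX hX0 hsurj c b hab q y, sing_inner_right, sing_apply_ne N _ _ (by
      rintro rfl; exact hi rfl), inner_zero_left]
  · rw [hX0' N X hX hX0 hsurj a b hab ⟨c, q⟩ y hc, inner_zero_right]

theorem chi_single_eq {a b : K} (p : Path K a b) : ∀ (s : PCl K a) (h : N.H a),
    chi N X p (sing N ⟨a, s⟩ h) = sing N ⟨b, sigE p s⟩ (tau N hsurj p h) := by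
  induction p with
  | nil =>
      intro s h
      simp only [chi]
      rw [hX' N X hX hX0 hsurj a a (le_refl a) s h, shiftCl_refl, N.γ_id]
      exact sing_congr2 N (by simp [sigE]) (by simp [tau])
  | up hbc p ih =>
      intro s h
      simp only [chi, comp_apply]
      rw [ih s h, hX' N X hX hX0 hsurj _ _ hbc]
      exact sing_congr2 N (by simp [sigE, shiftE_apply]) (by simp [tau, gamE_apply])
  | down hcb p ih =>
      intro s h
      simp only [chi, comp_apply]
      rw [ih s h, adjX_single_eq N X hX hX0 hsurj hcb]
      exact sing_congr2 N (by simp [sigE]) (by simp [tau])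

theorem chi_single_ne {a b : K} (p : Path K a b) : ∀ (i : PIdx K) (x : N.H i.1),
    i.1 ≠ a → chi N X p (sing N i x) = 0 := by
  induction p with
  | nil =>
      intro i x hi
      simp only [chi]
      exact hX0' N X hX hX0 hsurj a a (le_refl a) i x hi
  | up hbc p ih =>
      intro i x hi
      simp only [chi, comp_apply]
      rw [ih i x hi, map_zero]
  | down hcb p ih =>
      intro i x hi
      simp only [chi, comp_apply]
      rw [ih i x hi, map_zero]

theorem adj_chi_eq {a b : K} (p : Path K a b) : ∀ (s : PCl K b) (h : N.H b),
    adjoint (chi N X p) (sing N ⟨b, s⟩ h) =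
      sing N ⟨a, (sigE p).symm s⟩ ((tau N hsurj p).symm h) := by
  induction p with
  | nil =>
      intro s h
      simp only [chi]
      rw [adjX_single_eq N X hX hX0 hsurj (le_refl a) s h]
      have e1 : (shiftE (le_refl a)).symm s = (sigE (Path.nil a)).symm s := by
        rw [Equiv.symm_apply_eq, shiftE_apply, shiftCl_refl]
        simp [sigE]
      have e2 : (gamE N hsurj (le_refl a)).symm h = (tau N hsurj (Path.nil a)).symm h := by
        apply (gamE N hsurj (le_refl a)).injective
        rw [LinearIsometryEquiv.apply_symm_apply, gamE_refl]
        simp [tau, lie_refl_symm]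
      exact sing_congr2 N e1 e2
  | up hbc p ih =>
      intro s h
      simp only [chi]
      rw [adjoint_comp, comp_apply, adjX_single_eq N X hX hX0 hsurj hbc s h, ih]
      exact sing_congr2 N (by simp [sigE, Equiv.symm_trans_apply])
        (by simp [tau, lie_symm_trans_apply])
  | down hcb p ih =>
      intro s h
      simp only [chi]
      rw [adjoint_comp, adjoint_adjoint, comp_apply, hX' N X hX hX0 hsurj _ _ hcb s h, ih]
      exact sing_congr2 N
        (by simp [sigE, Equiv.symm_trans_apply, Equiv.symm_symm, shiftE_apply])
        (by simp [tau, lie_symm_trans_apply, LinearIsometryEquiv.symm_symm,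
          gamE_apply])

theorem adj_chi_ne {a b : K} (p : Path K a b) : ∀ (i : PIdx K) (x : N.H i.1),
    i.1 ≠ b → adjoint (chi N X p) (sing N i x) = 0 := by
  induction p with
  | nil =>
      intro i x hi
      simp only [chi]
      exact adjX_single_ne N X hX hX0 hsurj (le_refl a) i x hi
  | up hbc p ih =>
      intro i x hi
      simp only [chi]
      rw [adjoint_comp, comp_apply, adjX_single_ne N X hX hX0 hsurj hbc i x hi, map_zero]
  | down hcb p ih =>
      intro i x hi
      simp only [chi]
      rw [adjoint_comp, adjoint_adjoint, comp_apply, hX0' N X hX hX0 hsurj _ _ hcb i x hi, map_zero]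

theorem chi_comp {a b c : K} (p : Path K b c) (q : Path K a b) :
    chi N X (p.comp q) = chi N X p ∘L chi N X q := by
  induction p with
  | nil =>
      rw [Path.nil_comp]
      apply ext_single N
      rintro ⟨c', s⟩ x
      by_cases hc : c' = a
      · subst hc
        rw [comp_apply, chi_single_eq N X hX hX0 hsurj q s x,
          chi_single_eq N X hX hX0 hsurj (Path.nil b) _ _]
        exact sing_congr2 N (by simp [sigE]) (by simp [tau])
      · rw [comp_apply, chi_single_ne N X hX hX0 hsurj q _ x hc, map_zero]
  | up hbc p ih =>
      rw [Path.up_comp]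
      simp only [chi]
      rw [ih, comp_assoc]
  | down hcb p ih =>
      rw [Path.down_comp]
      simp only [chi]
      rw [ih, comp_assoc]

theorem chi_equiv {a b : K} {p q : Path K a b} (h : PathEquiv p q) :
    chi N X p = chi N X q := by
  apply ext_single N
  rintro ⟨c, s⟩ x
  by_cases hc : c = a
  · subst hc
    rw [chi_single_eq N X hX hX0 hsurj p s x, chi_single_eq N X hX hX0 hsurj q s x,
      sigE_equiv h, tau_equiv N hsurj h]
  · rw [chi_single_ne N X hX hX0 hsurj p _ x hc, chi_single_ne N X hX hX0 hsurj q _ x hc]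

end Chi

open ContinuousLinearMap in
/-- If every `γ_{ba}` is an isometric isomorphism, the map
`π*([p̄]) = χ_{p̄}` is a well-defined representation of the path groupoid `S̄/∼`
by partial isometries on `H = ⊕_{a∈K}(H_a ⊗ ℓ²(S_a))`: it is constant on
equivalence classes and satisfies `π*([p̄]*[q̄]) = π*([p̄]) π*([q̄])` whenever
`∂₁p̄ = ∂₀q̄`. -/
theorem chi_groupoid_representation {K : Type} [PartialOrder K] (N : HilbertNet K)
    (X : ∀ (a b : K), a ≤ b → (BigH N →L[ℂ] BigH N))
    (hX : ChiOnBasis N X) (hX0 : ChiVanishes N X)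
    (hsurj : ∀ {a b : K} (hab : a ≤ b), Function.Surjective (N.γ hab)) :
    ∃ rep : ∀ a b : K, Quot (@PathEquiv K _ a b) → (BigH N →L[ℂ] BigH N),
      (∀ (a b : K) (p : Path K a b), rep a b (Quot.mk _ p) = chi N X p) ∧
      (∀ (a b : K) (p : Path K a b),
        chi N X p ∘L adjoint (chi N X p) ∘L chi N X p = chi N X p) ∧
      (∀ (a b c : K) (p : Path K b c) (q : Path K a b),
        rep a c (Quot.mk _ (p.comp q)) = rep b c (Quot.mk _ p) ∘L rep a b (Quot.mk _ q)) := by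
  refine ⟨fun a b => Quot.lift (chi N X) (fun p q h => chi_equiv N X hX hX0 hsurj h),
    fun a b p => rfl, ?_, ?_⟩
  · intro a b p
    apply ext_single N
    rintro ⟨c, s⟩ x
    by_cases hc : c = a
    · subst hc
      rw [comp_apply, comp_apply, chi_single_eq N X hX hX0 hsurj p s x,
        adj_chi_eq N X hX hX0 hsurj p, Equiv.symm_apply_apply,
        LinearIsometryEquiv.symm_apply_apply, chi_single_eq N X hX hX0 hsurj p s x]
    · rw [comp_apply, comp_apply, chi_single_ne N X hX hX0 hsurj p _ x hc, map_zero, map_zero]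
  · intro a b c p q
    exact chi_comp N X hX hX0 hsurj p q

end PosetNets
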